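/- arXiv:1607.08534 — 4 statements merged into one kernel-verified Lean document; each statement's English description precedes it below -/
import Mathlib

section
/- For c = 1 and α = (π/2)² - 2, the dispersion function D(k) = -k² + 2(1 - cos k) + α has exactly two real roots, namely k = π/2 and k = -π/2. -/
open Real

lemma g_strictMono : StrictMonoOn (fun k : ℝ => k ^ 2 + 2 * Real.cos k) (Set.Ici 0) := by
  apply strictMonoOn_of_deriv_pos (convex_Ici 0)
  · fun_prop
  · intro x hx
    rw [interior_Ici] at hx
    have hx : (0:ℝ) < x := hx
    have h1 : deriv (fun k : ℝ => k ^ 2 + 2 * Real.cos k) x = 2 * x - 2 * Real.sin x := by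
      simp [deriv_add, mul_comm]; ring
    rw [h1]
    have := Real.sin_lt hx
    linarith

/-- For `c = 1` and `α = (π/2)² - 2`, the dispersion function
`D(k) = -k² + 2(1 - cos k) + α` has exactly two real roots, `π/2` and `-π/2`. -/
theorem stmt_2 :
    {k : ℝ | -k ^ 2 + 2 * (1 - Real.cos k) + ((π / 2) ^ 2 - 2) = 0}
      = {π / 2, -(π / 2)} := by
  have hpi : (0:ℝ) < π / 2 := by positivity
  ext k
  simp only [Set.mem_setOf_eq, Set.mem_insert_iff, Set.mem_singleton_iff]
  constructor
  · intro h
    have heq : |k| ^ 2 + 2 * Real.cos |k| = (π / 2) ^ 2 + 2 * Real.cos (π / 2) := by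
      rw [Real.cos_abs, Real.cos_pi_div_two, sq_abs]
      linarith
    have := g_strictMono.injOn (Set.mem_Ici.2 (abs_nonneg k)) (Set.mem_Ici.2 hpi.le) heq
    rcases abs_eq hpi.le |>.mp this with h | h
    · left; exact h
    · right; exact h
  · rintro (rfl | rfl) <;> simp [Real.cos_pi_div_two]
end

section
/- Let k₀ = π/2, α = c²k₀² - 2, and suppose |λ| < 1 and θ ∈ [0, 2π). Then the function u(x) = 1 + λ sin(k₀ x + θ) satisfies c²u''(x) - (u(x+1) - 2u(x) + u(x-1)) + α u(x) - α sgn(u(x)) = 0 for all x ∈ ℝ. -/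
/-!
Write `u = 1 + λ w` with the plane wave `w x = sin (k x + θ)`. Both `c² ∂²` and the discrete
Laplacian act on `w` by multiplication, by `-c²k²` and `2 (cos k - 1)` respectively, so the linear
part of the equation applied to `λ w` is `λ D(k) w` with `D(k) = -c²k² + 2 (1 - cos k) + α`, which
vanishes at `k = π/2`. On the constant `1` the linear part gives `α`, and since `|λ| < 1` keeps `u`
positive, `α sgn u = α` cancels it.
-/

open Real

lemma one_add_mul_sin_pos {lam : ℝ} (hlam : |lam| < 1) (a : ℝ) : 0 < 1 + lam * sin a := by
  have : |lam * sin a| < 1 := by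
    calc |lam * sin a| = |lam| * |sin a| := abs_mul _ _
      _ ≤ |lam| := mul_le_of_le_one_right (abs_nonneg _) (abs_sin_le_one a)
      _ < 1 := hlam
  linarith [(abs_lt.mp this).1]

section PlaneWave

variable (k θ : ℝ)

lemma hasDerivAt_sin_mul_add (x : ℝ) :
    HasDerivAt (fun y => sin (k * y + θ)) (k * cos (k * x + θ)) x := by
  simpa [mul_comm] using ((hasDerivAt_id x).const_mul k |>.add_const θ).sin

lemma hasDerivAt_cos_mul_add (x : ℝ) :
    HasDerivAt (fun y => cos (k * y + θ)) (-(k * sin (k * x + θ))) x := by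
  simpa [mul_comm] using ((hasDerivAt_id x).const_mul k |>.add_const θ).cos

lemma deriv_deriv_const_add_mul_sin (a b x : ℝ) :
    deriv (deriv fun y => a + b * sin (k * y + θ)) x = -k ^ 2 * (b * sin (k * x + θ)) := by
  have hd : deriv (fun y => a + b * sin (k * y + θ)) = fun y => b * (k * cos (k * y + θ)) :=
    funext fun y => ((hasDerivAt_sin_mul_add k θ y).const_mul b |>.const_add a).deriv
  rw [hd, (((hasDerivAt_cos_mul_add k θ x).const_mul k).const_mul b).deriv]
  ring

lemma sin_mul_add_add_one_add_sin_mul_sub_one (x : ℝ) :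
    sin (k * (x + 1) + θ) + sin (k * (x - 1) + θ) = 2 * cos k * sin (k * x + θ) := by
  have hp : k * (x + 1) + θ = (k * x + θ) + k := by ring
  have hm : k * (x - 1) + θ = (k * x + θ) - k := by ring
  rw [hp, hm, sin_add, sin_sub]
  ring

end PlaneWave

theorem stmt_3_general (c lam θ : ℝ) (hlam : |lam| < 1) :
    let k₀ : ℝ := π / 2
    let α : ℝ := c ^ 2 * k₀ ^ 2 - 2
    let u : ℝ → ℝ := fun x => 1 + lam * Real.sin (k₀ * x + θ)
    ∀ x : ℝ,
      c ^ 2 * deriv (deriv u) x - (u (x + 1) - 2 * u x + u (x - 1))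
        + α * u x - α * Real.sign (u x) = 0 := by
  intro k₀ α u x
  have hu'' := deriv_deriv_const_add_mul_sin k₀ θ 1 lam x
  have hΔ := sin_mul_add_add_one_add_sin_mul_sub_one k₀ θ x
  have hsign : Real.sign (u x) = 1 := Real.sign_of_pos (one_add_mul_sin_pos hlam _)
  simp only [k₀, cos_pi_div_two] at hΔ
  simp only [u, α, hu'', hsign]
  linear_combination (-lam) * hΔ

/-- With `k₀ = π/2`, `α = c²k₀² - 2`, `|λ| < 1` and `θ ∈ [0, 2π)`, the
function `u(x) = 1 + λ sin(k₀ x + θ)` satisfies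
`c²u''(x) - (u(x+1) - 2u(x) + u(x-1)) + α u(x) - α sgn(u(x)) = 0` for all `x`. -/
theorem stmt_3 (c lam θ : ℝ) (hlam : |lam| < 1) (hθ : θ ∈ Set.Ico 0 (2 * π)) :
    let k₀ : ℝ := π / 2
    let α : ℝ := c ^ 2 * k₀ ^ 2 - 2
    let u : ℝ → ℝ := fun x => 1 + lam * Real.sin (k₀ * x + θ)
    ∀ x : ℝ,
      c ^ 2 * deriv (deriv u) x - (u (x + 1) - 2 * u x + u (x - 1))
        + α * u x - α * Real.sign (u x) = 0 :=
  stmt_3_general c lam θ hlam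
end

section
/- Let k₀ = π/2 and α = c²k₀² - 2. If u_o : ℝ → ℝ is continuous, u_o'' exists and is continuous on ℝ∖[-1,1], there exists ν < 0 such that x ↦ e^{-ν|x|}(u_o(x) - sgn(x)cos(k₀x)) and its first derivative are bounded on ℝ∖[-1,1] (with corresponding bound on the second derivative), and c² k₀ > 1, then ∫_ℝ sin(k₀x)(c²u_o''(x) - Δ_D u_o(x) + α u_o(x)) dx = -2c²k₀ + 2 < 0. -/
/-!
Write `k₀ = π/2`. Since `sin (k₀ x)` solves `s'' = -k₀² s`, the differential part
`sin (k₀ x) · c² (u'' + k₀² u)` integrates exactly to `c²` times the Wronskian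
`sin (k₀ x) u' - k₀ cos (k₀ x) u` evaluated between `-R` and `R`. Because `k₀ = π/2`, the shifts
`x ↦ x ± 1` turn `sin (k₀ x)` into `∓ cos (k₀ x)`, so the two shifted terms telescope to integrals
of `cos (k₀ y) u y` over the windows `[R - 1, R + 1]` and `[-R - 1, -R + 1]`. As `u` approaches
`sign x · cos (k₀ x)` exponentially fast, the Wronskian tends to `∓ k₀` at `±R` and each window
integral to `± ∫ cos² = ±1`, which gives the limit `-2 c² k₀ + 2`.
-/

open Real Filter Topology Set

lemma integral_cos_pi_div_two_mul_sq_window (a : ℝ) :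
    ∫ y in (a - 1)..(a + 1), cos (π / 2 * y) ^ 2 = 1 := by
  have hπ : π / 2 ≠ 0 := by positivity
  rw [intervalIntegral.integral_comp_mul_left (fun y => cos y ^ 2) hπ, integral_cos_sq,
    show π / 2 * (a + 1) = π / 2 * (a - 1) + π by ring, cos_add_pi, sin_add_pi]
  rw [smul_eq_mul]
  field_simp
  ring

lemma tendsto_zero_of_abs_le_exp {f : ℝ → ℝ} {ν C : ℝ} (hν : ν < 0)
    (h : ∀ᶠ x in cocompact ℝ, |f x| ≤ C * exp (ν * |x|)) :
    Tendsto f (cocompact ℝ) (𝓝 0) := by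
  have hexp : Tendsto (fun x : ℝ => C * exp (ν * |x|)) (cocompact ℝ) (𝓝 0) := by
    simpa using ((tendsto_exp_atBot.comp
      ((tendsto_norm_cocompact_atTop (E := ℝ)).const_mul_atTop_of_neg hν)).const_mul C)
  exact squeeze_zero_norm' h hexp

lemma tendsto_integral_window_of_abs_le_exp {f : ℝ → ℝ} {ν C : ℝ} (hν : ν < 0)
    (h : ∀ x, 1 < |x| → |f x| ≤ C * exp (ν * |x|)) :
    Tendsto (fun a => ∫ y in (a - 1)..(a + 1), f y) (cocompact ℝ) (𝓝 0) := by
  have hC : 0 ≤ C := by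
    have h2 := h 2 (by norm_num [abs_of_pos])
    exact nonneg_of_mul_nonneg_left ((abs_nonneg _).trans h2) (exp_pos _)
  apply tendsto_zero_of_abs_le_exp (C := 2 * C * exp (-ν)) hν
  filter_upwards [(tendsto_norm_cocompact_atTop (E := ℝ)).eventually_gt_atTop 2] with a ha
  rw [Real.norm_eq_abs] at ha
  have hbound : ∀ y ∈ uIoc (a - 1) (a + 1), ‖f y‖ ≤ C * exp (ν * (|a| - 1)) := by
    intro y hy
    rw [Set.uIoc_of_le (by linarith)] at hy
    have hy : |a| - 1 ≤ |y| := by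
      cases abs_cases a <;> cases abs_cases y <;> linarith [hy.1, hy.2]
    calc ‖f y‖ ≤ C * exp (ν * |y|) := h y (by linarith)
      _ ≤ C * exp (ν * (|a| - 1)) :=
        mul_le_mul_of_nonneg_left (exp_le_exp.mpr (mul_le_mul_of_nonpos_left hy hν.le)) hC
  calc |∫ y in (a - 1)..(a + 1), f y| ≤ C * exp (ν * (|a| - 1)) * |a + 1 - (a - 1)| :=
        intervalIntegral.norm_integral_le_of_norm_le_const hbound
    _ = 2 * C * exp (-ν) * exp (ν * |a|) := by
        rw [show ν * (|a| - 1) = -ν + ν * |a| by ring, exp_add, show a + 1 - (a - 1) = 2 by ring,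
          abs_two]
        ring

lemma tendsto_sub_comp_neg_of_tendsto_sub_sign_mul {F : ℝ → ℝ} {L : ℝ}
    (h : Tendsto (fun x => F x - sign x * L) (cocompact ℝ) (𝓝 0)) :
    Tendsto (fun R => F R - F (-R)) atTop (𝓝 (2 * L)) := by
  have hpos := h.comp (tendsto_id.mono_right atTop_le_cocompact)
  have hneg := h.comp (tendsto_neg_atTop_atBot.mono_right atBot_le_cocompact)
  have hlim := (hpos.sub hneg).add_const (2 * L)
  rw [sub_zero, zero_add] at hlim
  refine hlim.congr' ?_
  filter_upwards [eventually_gt_atTop 0] with R hR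
  simp only [Function.comp_apply, id, sign_of_pos hR, sign_of_neg (neg_neg_of_pos hR)]
  ring

noncomputable section

def sinWronskian (k : ℝ) (u : ℝ → ℝ) (x : ℝ) : ℝ :=
  sin (k * x) * deriv u x - k * cos (k * x) * u x

def cosWindowIntegral (u : ℝ → ℝ) (a : ℝ) : ℝ :=
  ∫ y in (a - 1)..(a + 1), cos (π / 2 * y) * u y

end

section
variable {u : ℝ → ℝ}

lemma ContDiff.continuous_deriv_deriv (hu : ContDiff ℝ 2 u) : Continuous (deriv (deriv u)) :=
  (contDiff_succ_iff_deriv.mp hu).2.2.continuous_deriv le_rfl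

lemma hasDerivAt_sinWronskian (hu : ContDiff ℝ 2 u) (k x : ℝ) :
    HasDerivAt (sinWronskian k u) (sin (k * x) * (deriv (deriv u) x + k ^ 2 * u x)) x := by
  have hu' : ContDiff ℝ 1 (deriv u) := (contDiff_succ_iff_deriv.mp hu).2.2
  have h1 : HasDerivAt u (deriv u x) x := (hu.differentiable two_ne_zero x).hasDerivAt
  have h2 : HasDerivAt (deriv u) (deriv (deriv u) x) x :=
    (hu'.differentiable one_ne_zero x).hasDerivAt
  have hsin : HasDerivAt (fun x => sin (k * x)) (cos (k * x) * k) x := by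
    simpa using ((hasDerivAt_id x).const_mul k).sin
  have hcos : HasDerivAt (fun x => cos (k * x)) (-sin (k * x) * k) x := by
    simpa using ((hasDerivAt_id x).const_mul k).cos
  exact ((hsin.mul h2).sub ((hcos.const_mul k).mul h1)).congr_deriv (by ring)

lemma integral_sin_mul_deriv_deriv_add (hu : ContDiff ℝ 2 u) (k a b : ℝ) :
    ∫ x in a..b, sin (k * x) * (deriv (deriv u) x + k ^ 2 * u x)
      = sinWronskian k u b - sinWronskian k u a := by
  have hu0 := hu.continuous
  have hu2 := hu.continuous_deriv_deriv
  exact intervalIntegral.integral_eq_sub_of_hasDerivAt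
    (fun x _ => hasDerivAt_sinWronskian hu k x)
    ((by fun_prop : Continuous _).intervalIntegrable a b)

lemma integral_sin_mul_add_shifts (hu : Continuous u) (a b : ℝ) :
    ∫ x in a..b, sin (π / 2 * x) * (u (x + 1) + u (x - 1))
      = cosWindowIntegral u a - cosWindowIntegral u b := by
  have hcu : Continuous (fun y => cos (π / 2 * y) * u y) := by fun_prop
  have hfwd : ∫ x in a..b, sin (π / 2 * x) * u (x + 1)
      = -∫ y in (a + 1)..(b + 1), cos (π / 2 * y) * u y := by
    rw [← intervalIntegral.integral_neg, ← intervalIntegral.integral_comp_add_right]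
    congr 1 with x
    rw [mul_add, mul_one, cos_add_pi_div_two]
    ring
  have hbwd : ∫ x in a..b, sin (π / 2 * x) * u (x - 1)
      = ∫ y in (a - 1)..(b - 1), cos (π / 2 * y) * u y := by
    rw [← intervalIntegral.integral_comp_sub_right]
    congr 1 with x
    rw [mul_sub, mul_one, cos_sub_pi_div_two]
  simp_rw [mul_add]
  rw [intervalIntegral.integral_add ((by fun_prop : Continuous _).intervalIntegrable a b)
      ((by fun_prop : Continuous _).intervalIntegrable a b), hfwd, hbwd, cosWindowIntegral,
    cosWindowIntegral, ← intervalIntegral.integral_add_adjacent_intervals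
      (hcu.intervalIntegrable (a - 1) (a + 1)) (hcu.intervalIntegrable _ (b - 1)),
    ← intervalIntegral.integral_add_adjacent_intervals
      (hcu.intervalIntegrable (a + 1) (b - 1)) (hcu.intervalIntegrable _ (b + 1))]
  ring

lemma integral_sin_mul_wave_operator_eq (hu : ContDiff ℝ 2 u) (c a b : ℝ) :
    ∫ x in a..b, sin (π / 2 * x) * (c ^ 2 * deriv (deriv u) x
        - (u (x + 1) - 2 * u x + u (x - 1)) + (c ^ 2 * (π / 2) ^ 2 - 2) * u x)
      = c ^ 2 * (sinWronskian (π / 2) u b - sinWronskian (π / 2) u a)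
        + (cosWindowIntegral u b - cosWindowIntegral u a) := by
  have hu0 := hu.continuous
  have hu2 := hu.continuous_deriv_deriv
  have hsplit : ∀ x, sin (π / 2 * x) * (c ^ 2 * deriv (deriv u) x
        - (u (x + 1) - 2 * u x + u (x - 1)) + (c ^ 2 * (π / 2) ^ 2 - 2) * u x)
      = c ^ 2 * (sin (π / 2 * x) * (deriv (deriv u) x + (π / 2) ^ 2 * u x))
        - sin (π / 2 * x) * (u (x + 1) + u (x - 1)) := fun x => by ring
  simp_rw [hsplit]
  rw [intervalIntegral.integral_sub ((by fun_prop : Continuous _).intervalIntegrable a b)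
      ((by fun_prop : Continuous _).intervalIntegrable a b),
    intervalIntegral.integral_const_mul, integral_sin_mul_deriv_deriv_add hu,
    integral_sin_mul_add_shifts hu0]
  ring

lemma tendsto_sinWronskian_sub_sign {k ν C : ℝ} (hk : 0 ≤ k) (hν : ν < 0)
    (h : ∀ x, 1 < |x| → |u x - sign x * cos (k * x)| ≤ C * exp (ν * |x|) ∧
      |deriv u x - sign x * (-k * sin (k * x))| ≤ C * exp (ν * |x|)) :
    Tendsto (fun x => sinWronskian k u x - sign x * -k) (cocompact ℝ) (𝓝 0) := by
  apply tendsto_zero_of_abs_le_exp (C := (1 + k) * C) hν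
  filter_upwards [(tendsto_norm_cocompact_atTop (E := ℝ)).eventually_gt_atTop 1] with x hx
  obtain ⟨h0, h1⟩ := h x hx
  have hid : sinWronskian k u x - sign x * -k
      = sin (k * x) * (deriv u x - sign x * (-k * sin (k * x)))
        - k * (cos (k * x) * (u x - sign x * cos (k * x))) := by
    rw [sinWronskian]
    linear_combination (-k * sign x) * sin_sq_add_cos_sq (k * x)
  rw [hid]
  calc _ ≤ |sin (k * x) * (deriv u x - sign x * (-k * sin (k * x)))|
        + |k * (cos (k * x) * (u x - sign x * cos (k * x)))| := abs_sub _ _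
    _ ≤ 1 * (C * exp (ν * |x|)) + k * (1 * (C * exp (ν * |x|))) := by
        rw [abs_mul, abs_mul, abs_mul, abs_of_nonneg hk]
        gcongr
        · exact abs_sin_le_one _
        · exact abs_cos_le_one _
    _ = (1 + k) * C * exp (ν * |x|) := by ring

lemma sign_eq_of_mem_window {a y : ℝ} (ha : 1 < |a|) (hy : y ∈ uIcc (a - 1) (a + 1)) :
    sign y = sign a := by
  rw [uIcc_of_le (by linarith)] at hy
  rcases lt_abs.mp ha with ha | ha
  · rw [sign_of_pos (by linarith [hy.1]), sign_of_pos (by linarith)]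
  · rw [sign_of_neg (by linarith [hy.2]), sign_of_neg (by linarith)]

lemma tendsto_cosWindowIntegral_sub_sign {ν C : ℝ} (hu : Continuous u) (hν : ν < 0)
    (h : ∀ x, 1 < |x| → |u x - sign x * cos (π / 2 * x)| ≤ C * exp (ν * |x|)) :
    Tendsto (fun a => cosWindowIntegral u a - sign a) (cocompact ℝ) (𝓝 0) := by
  refine (tendsto_integral_window_of_abs_le_exp
    (f := fun y => cos (π / 2 * y) * (u y - sign y * cos (π / 2 * y))) (C := C) hν ?_).congr' ?_
  · intro x hx
    rw [abs_mul]
    exact (mul_le_of_le_one_left (abs_nonneg _) (abs_cos_le_one _)).trans (h x hx)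
  · filter_upwards [(tendsto_norm_cocompact_atTop (E := ℝ)).eventually_gt_atTop 1] with a ha
    rw [Real.norm_eq_abs] at ha
    calc ∫ y in (a - 1)..(a + 1), cos (π / 2 * y) * (u y - sign y * cos (π / 2 * y))
        = ∫ y in (a - 1)..(a + 1), cos (π / 2 * y) * u y - sign a * cos (π / 2 * y) ^ 2 :=
          intervalIntegral.integral_congr fun y hy => by
            simp only [sign_eq_of_mem_window ha hy]
            ring
      _ = cosWindowIntegral u a - sign a * ∫ y in (a - 1)..(a + 1), cos (π / 2 * y) ^ 2 := by
          rw [intervalIntegral.integral_sub ((by fun_prop : Continuous _).intervalIntegrable _ _)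
            ((by fun_prop : Continuous _).intervalIntegrable _ _),
            intervalIntegral.integral_const_mul, cosWindowIntegral]
      _ = cosWindowIntegral u a - sign a := by
          rw [integral_cos_pi_div_two_mul_sq_window, mul_one]

end

/-- With `k₀ = π/2`, `α = c²k₀² - 2` and `c²k₀ > 1`, if `u_o : ℝ → ℝ` is `C²`
and converges exponentially (together with its first two derivatives) to
`sgn(x) cos(k₀ x)` outside `[-1,1]`, then the improper integral
`∫ sin(k₀x)(c²u_o'' - Δ_D u_o + α u_o) dx` equals `-2c²k₀ + 2 < 0`. -/
theorem stmt_4 (c : ℝ) (u_o : ℝ → ℝ)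
    (hC2 : ContDiff ℝ 2 u_o)
    (hck : 1 < c ^ 2 * (π / 2))
    (hdecay : ∃ ν C : ℝ, ν < 0 ∧
      ∀ x : ℝ, 1 < |x| →
        |u_o x - Real.sign x * Real.cos (π / 2 * x)| ≤ C * Real.exp (ν * |x|) ∧
        |deriv u_o x - Real.sign x * (-(π / 2) * Real.sin (π / 2 * x))|
          ≤ C * Real.exp (ν * |x|) ∧
        |deriv (deriv u_o) x - Real.sign x * (-(π / 2) ^ 2 * Real.cos (π / 2 * x))|
          ≤ C * Real.exp (ν * |x|)) :
    let k₀ : ℝ := π / 2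
    let α : ℝ := c ^ 2 * k₀ ^ 2 - 2
    Filter.Tendsto
      (fun R : ℝ => ∫ x in (-R)..R,
        Real.sin (k₀ * x) *
          (c ^ 2 * deriv (deriv u_o) x
            - (u_o (x + 1) - 2 * u_o x + u_o (x - 1)) + α * u_o x))
      Filter.atTop (nhds (-2 * c ^ 2 * k₀ + 2)) ∧
    -2 * c ^ 2 * k₀ + 2 < 0 := by
  dsimp only
  obtain ⟨ν, C, hν, hdec⟩ := hdecay
  have hwronskian := tendsto_sub_comp_neg_of_tendsto_sub_sign_mul
    (tendsto_sinWronskian_sub_sign (by positivity) hν fun x hx => (hdec x hx).imp_right And.left)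
  have hwindow := tendsto_sub_comp_neg_of_tendsto_sub_sign_mul (L := 1)
    (by simpa using tendsto_cosWindowIntegral_sub_sign hC2.continuous hν fun x hx => (hdec x hx).1)
  refine ⟨?_, by linarith⟩
  convert (hwronskian.const_mul (c ^ 2)).add hwindow using 1
  · exact funext fun R => integral_sin_mul_wave_operator_eq hC2 c (-R) R
  · congr 1
    ring
end

section
/- Let p₀ > 0, G ∈ C(ℝ) with sup_x e^{-ν|x|}|G(x)| < ∞ for some ν ∈ (-p₀, p₀), and κ ∈ C_0^∞(ℝ, [0,∞)) with ∫_ℝ κ = 1. Define G̃(t) = cosh(p₀t)(∫_{-∞}^t G(u)/cosh(p₀u) du - ∫_{-∞}^t κ(u) du · ∫_ℝ G(u)/cosh(p₀u) du). Then G̃ is C¹, sup_t e^{-ν|t|}(|G̃(t)| + |G̃'(t)|) < ∞, and G̃'(t) = G(t) - cosh(p₀t)κ(t)∫_ℝ G(u)/cosh(p₀u) du + p₀ tanh(p₀t) G̃(t). -/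
open Real MeasureTheory Set

private lemma exp_abs_le_two_cosh (x : ℝ) : Real.exp |x| ≤ 2 * Real.cosh x := by
  rw [← Real.cosh_abs, Real.cosh_eq]
  have := (Real.exp_pos (-|x|)).le
  linarith

private lemma cosh_le_exp_abs' (x : ℝ) : Real.cosh x ≤ Real.exp |x| := by
  rw [Real.cosh_eq]
  have h1 : Real.exp x ≤ Real.exp |x| := Real.exp_le_exp.2 (le_abs_self x)
  have h2 : Real.exp (-x) ≤ Real.exp |x| := Real.exp_le_exp.2 (neg_le_abs x)
  linarith

private lemma abs_tanh_le_one (x : ℝ) : |Real.tanh x| ≤ 1 := by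
  rw [Real.tanh_eq_sinh_div_cosh, abs_div, abs_of_pos (Real.cosh_pos x),
    div_le_one (Real.cosh_pos x), Real.abs_sinh, ← Real.cosh_abs]
  exact (Real.sinh_lt_cosh |x|).le

private lemma integral_exp_neg_mul_Ioi' {a : ℝ} (ha : 0 < a) (t : ℝ) :
    ∫ u in Set.Ioi t, Real.exp (-(a * u)) = Real.exp (-(a * t)) / a := by
  have h := integral_comp_mul_left_Ioi (fun x => Real.exp (-x)) t ha
  simp only [integral_exp_neg_Ioi] at h
  rw [show (fun u : ℝ => Real.exp (-(a * u))) = fun x : ℝ => Real.exp (-(a * x)) from rfl]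
  rw [h, smul_eq_mul]
  ring

private lemma integrableOn_exp_neg_mul_Ioi' {a : ℝ} (ha : 0 < a) (t : ℝ) :
    IntegrableOn (fun u : ℝ => Real.exp (-(a * u))) (Set.Ioi t) := by
  have := exp_neg_integrableOn_Ioi t ha
  simpa [neg_mul] using this

private lemma integral_exp_mul_Iic' {a : ℝ} (ha : 0 < a) (t : ℝ) :
    ∫ u in Set.Iic t, Real.exp (a * u) = Real.exp (a * t) / a := by
  have h := integral_comp_neg_Ioi (c := -t) (f := fun u : ℝ => Real.exp (a * u))
  rw [neg_neg] at h
  rw [← h]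
  have h2 : (fun x : ℝ => Real.exp (a * -x)) = fun x : ℝ => Real.exp (-(a * x)) := by
    funext x; ring_nf
  calc (∫ x in Set.Ioi (-t), Real.exp (a * -x)) = ∫ x in Set.Ioi (-t), Real.exp (-(a * x)) := by
        rw [h2]
    _ = Real.exp (-(a * -t)) / a := integral_exp_neg_mul_Ioi' ha (-t)
    _ = Real.exp (a * t) / a := by ring_nf

private lemma integrableOn_exp_mul_Iic' {a : ℝ} (ha : 0 < a) (t : ℝ) :
    IntegrableOn (fun u : ℝ => Real.exp (a * u)) (Set.Iic t) := by
  have h := integrableOn_exp_neg_mul_Ioi' ha (-t)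
  have h2 : Integrable ((Set.Ioi (-t)).indicator fun x : ℝ => Real.exp (-(a * x))) :=
    (integrable_indicator_iff measurableSet_Ioi).2 h
  have h3 := h2.comp_neg
  have h4 : (fun x : ℝ => ((Set.Ioi (-t)).indicator (fun x : ℝ => Real.exp (-(a * x)))) (-x))
      = (Set.Iio t).indicator (fun u : ℝ => Real.exp (a * u)) := by
    funext u
    by_cases hu : u < t
    · simp only [Set.indicator, Set.mem_Ioi, Set.mem_Iio, neg_lt_neg_iff, hu, if_true]
      ring_nf
    · simp only [Set.indicator, Set.mem_Ioi, Set.mem_Iio, neg_lt_neg_iff, hu, if_false]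
  rw [h4] at h3
  have h5 : IntegrableOn (fun u : ℝ => Real.exp (a * u)) (Set.Iio t) :=
    (integrable_indicator_iff measurableSet_Iio).1 h3
  exact (integrableOn_Iic_iff_integrableOn_Iio (hb := enorm_ne_top)).2 h5

/-- Scalar version of Lemma "widetilde G". For `G` continuous with
`e^{-ν|·|} G` bounded, `ν ∈ (-p₀, p₀)`, and `κ` smooth, nonnegative, compactly supported
with `∫ κ = 1`, the function
`G̃(t) = cosh(p₀t)(∫_{-∞}^t G/cosh(p₀·) - ∫_{-∞}^t κ ⋅ ∫_ℝ G/cosh(p₀·))`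
is `C¹` with `e^{-ν|·|}(|G̃| + |G̃'|)` bounded, and
`G̃'(t) = G(t) - cosh(p₀t)κ(t)∫_ℝ G/cosh(p₀·) + p₀ tanh(p₀t) G̃(t)`. -/
theorem stmt_11 (p₀ ν : ℝ) (hp₀ : 0 < p₀) (hν : ν ∈ Set.Ioo (-p₀) p₀)
    (G κ : ℝ → ℝ) (hGc : Continuous G)
    (hGb : ∃ C : ℝ, ∀ x : ℝ, Real.exp (-ν * |x|) * |G x| ≤ C)
    (hκ : ContDiff ℝ (⊤ : ℕ∞) κ) (hκsupp : HasCompactSupport κ)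
    (hκ0 : ∀ u : ℝ, 0 ≤ κ u) (hκ1 : ∫ u : ℝ, κ u = 1) :
    let Gt : ℝ → ℝ := fun t => Real.cosh (p₀ * t) *
      ((∫ u in Set.Iic t, G u / Real.cosh (p₀ * u))
        - (∫ u in Set.Iic t, κ u) * ∫ u : ℝ, G u / Real.cosh (p₀ * u))
    ContDiff ℝ 1 Gt ∧
    (∃ M : ℝ, ∀ t : ℝ, Real.exp (-ν * |t|) * (|Gt t| + |deriv Gt t|) ≤ M) ∧
    (∀ t : ℝ, deriv Gt t
      = G t - Real.cosh (p₀ * t) * κ t * (∫ u : ℝ, G u / Real.cosh (p₀ * u))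
        + p₀ * Real.tanh (p₀ * t) * Gt t) := by
  intro Gt
  obtain ⟨hν1, hν2⟩ := hν
  obtain ⟨C, hC⟩ := hGb
  have hC0 : 0 ≤ C := le_trans (by positivity) (hC 0)
  set a : ℝ := p₀ - ν with ha_def
  have ha : 0 < a := sub_pos.2 hν2
  set f : ℝ → ℝ := fun u => G u / Real.cosh (p₀ * u) with hf_def
  set I : ℝ := ∫ u : ℝ, f u with hI_def
  have hGt_eq : ∀ t, Gt t = Real.cosh (p₀ * t) *
      ((∫ u in Set.Iic t, f u) - (∫ u in Set.Iic t, κ u) * I) := fun t => rfl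
  have hfc : Continuous f :=
    hGc.div (Real.continuous_cosh.comp (continuous_const.mul continuous_id))
      (fun x => (Real.cosh_pos (p₀ * x)).ne')
  have hκc : Continuous κ := hκ.continuous
  have hκint : Integrable κ := hκc.integrable_of_hasCompactSupport hκsupp
  -- pointwise bounds
  have hGabs : ∀ x : ℝ, |G x| ≤ C * Real.exp (ν * |x|) := by
    intro x
    have h1 := mul_le_mul_of_nonneg_left (hC x) (Real.exp_pos (ν * |x|)).le
    rw [← mul_assoc, ← Real.exp_add] at h1
    have h2 : ν * |x| + -ν * |x| = 0 := by ring
    rw [h2, Real.exp_zero, one_mul] at h1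
    linarith [h1]
  have hfb : ∀ u : ℝ, |f u| ≤ 2 * C * Real.exp (-(a * |u|)) := by
    intro u
    have hcosh := Real.cosh_pos (p₀ * u)
    have h1 : |f u| = |G u| / Real.cosh (p₀ * u) := by
      rw [hf_def]; rw [abs_div, abs_of_pos hcosh]
    rw [h1, div_le_iff₀ hcosh]
    have h2 : Real.exp (p₀ * |u|) ≤ 2 * Real.cosh (p₀ * u) := by
      have := exp_abs_le_two_cosh (p₀ * u)
      rwa [abs_mul, abs_of_pos hp₀] at this
    have h3 : C * Real.exp (ν * |u|) * Real.exp (p₀ * |u|)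
        ≤ C * Real.exp (ν * |u|) * (2 * Real.cosh (p₀ * u)) := by
      have : 0 ≤ C * Real.exp (ν * |u|) := by positivity
      exact mul_le_mul_of_nonneg_left h2 this
    calc |G u| ≤ C * Real.exp (ν * |u|) := hGabs u
      _ = (C * Real.exp (-(a * |u|))) * Real.exp (p₀ * |u|) := by
          rw [mul_assoc, ← Real.exp_add, ha_def]; ring_nf
      _ ≤ (C * Real.exp (-(a * |u|))) * (2 * Real.cosh (p₀ * u)) :=
          mul_le_mul_of_nonneg_left h2 (by positivity)
      _ = 2 * C * Real.exp (-(a * |u|)) * Real.cosh (p₀ * u) := by ring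
  -- integrability of f
  have hmaj1 : IntegrableOn (fun u : ℝ => 2 * C * Real.exp (-(a * |u|))) (Set.Iic 0) := by
    refine MeasureTheory.IntegrableOn.congr_fun ((integrableOn_exp_mul_Iic' ha 0).const_mul (2 * C)) ?_ measurableSet_Iic
    intro u hu
    show 2 * C * Real.exp (a * u) = 2 * C * Real.exp (-(a * |u|))
    rw [abs_of_nonpos (Set.mem_Iic.1 hu)]
    ring_nf
  have hmaj2 : IntegrableOn (fun u : ℝ => 2 * C * Real.exp (-(a * |u|))) (Set.Ioi 0) := by
    refine MeasureTheory.IntegrableOn.congr_fun ((integrableOn_exp_neg_mul_Ioi' ha 0).const_mul (2 * C)) ?_ measurableSet_Ioi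
    intro u hu
    show 2 * C * Real.exp (-(a * u)) = 2 * C * Real.exp (-(a * |u|))
    rw [abs_of_pos (Set.mem_Ioi.1 hu)]
  have hmaj : Integrable (fun u : ℝ => 2 * C * Real.exp (-(a * |u|))) := by
    have h3 := hmaj1.union hmaj2
    rwa [Set.Iic_union_Ioi, integrableOn_univ] at h3
  have hfint : Integrable f :=
    hmaj.mono' hfc.aestronglyMeasurable
      (Filter.Eventually.of_forall fun u => by rw [Real.norm_eq_abs]; exact hfb u)
  -- primitives
  have primitive : ∀ (g : ℝ → ℝ), Integrable g → Continuous g →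
      ∀ t : ℝ, HasDerivAt (fun s => ∫ u in Set.Iic s, g u) (g t) t := by
    intro g hgi hgc t
    have h1 : HasDerivAt (fun s => (∫ u in Set.Iic 0, g u) + ∫ u in (0:ℝ)..s, g u) (g t) t :=
      (intervalIntegral.integral_hasDerivAt_right (hgi.intervalIntegrable)
        (hgc.stronglyMeasurableAtFilter _ _) hgc.continuousAt).const_add _
    refine h1.congr_of_eventuallyEq (Filter.Eventually.of_forall fun s => ?_)
    show (∫ u in Set.Iic s, g u) = (∫ u in Set.Iic 0, g u) + ∫ u in (0:ℝ)..s, g u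
    rw [← intervalIntegral.integral_Iic_sub_Iic hgi.integrableOn hgi.integrableOn]
    ring
  have hcosh : ∀ t : ℝ, HasDerivAt (fun s => Real.cosh (p₀ * s)) (p₀ * Real.sinh (p₀ * t)) t := by
    intro t
    have h := ((hasDerivAt_id t).const_mul p₀).cosh
    simpa [mul_comm] using h
  -- the derivative
  have hD : ∀ t : ℝ, HasDerivAt Gt
      (G t - Real.cosh (p₀ * t) * κ t * I + p₀ * Real.tanh (p₀ * t) * Gt t) t := by
    intro t
    have h1 := (hcosh t).mul (((primitive f hfint hfc) t).sub
      (((primitive κ hκint hκc) t).mul_const I))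
    have h2 : HasDerivAt Gt
        (p₀ * Real.sinh (p₀ * t) * ((∫ u in Set.Iic t, f u) - (∫ u in Set.Iic t, κ u) * I)
          + Real.cosh (p₀ * t) * (f t - κ t * I)) t := h1
    convert h2 using 1
    have hcp := Real.cosh_pos (p₀ * t)
    rw [hGt_eq, Real.tanh_eq_sinh_div_cosh, hf_def]
    field_simp
    ring
  have hderiv : ∀ t : ℝ, deriv Gt t
      = G t - Real.cosh (p₀ * t) * κ t * I + p₀ * Real.tanh (p₀ * t) * Gt t :=
    fun t => (hD t).deriv
  have hGtdiff : Differentiable ℝ Gt := fun t => (hD t).differentiableAt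
  have hGtc : Continuous Gt := hGtdiff.continuous
  refine ⟨?_, ?_, hderiv⟩
  · rw [contDiff_one_iff_deriv]
    refine ⟨hGtdiff, ?_⟩
    rw [funext hderiv]
    refine (hGc.sub ?_).add ?_
    · exact (Real.continuous_cosh.comp (continuous_const.mul continuous_id)).mul hκc
        |>.mul continuous_const
    · have htanhc : Continuous (fun t : ℝ => Real.tanh (p₀ * t)) := by
        have heq : (fun t : ℝ => Real.tanh (p₀ * t))
            = fun t : ℝ => Real.sinh (p₀ * t) / Real.cosh (p₀ * t) :=
          funext fun t => Real.tanh_eq_sinh_div_cosh _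
        rw [heq]
        exact (Real.continuous_sinh.comp (continuous_const.mul continuous_id)).div
          (Real.continuous_cosh.comp (continuous_const.mul continuous_id))
          (fun t => (Real.cosh_pos (p₀ * t)).ne')
      exact (continuous_const.mul htanhc).mul hGtc
  -- the bound
  obtain ⟨R0, hR0⟩ := hκsupp.isBounded.subset_closedBall 0
  set R : ℝ := max R0 0 + 1 with hR_def
  have hR1 : (1:ℝ) ≤ R := by
    have h := le_max_right R0 0
    rw [hR_def]; linarith
  have hκzero : ∀ u : ℝ, R ≤ |u| → κ u = 0 := by
    intro u hu
    apply image_eq_zero_of_notMem_tsupport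
    intro hmem
    have h1 := hR0 hmem
    rw [Metric.mem_closedBall, Real.dist_eq, sub_zero] at h1
    have h2 : R0 ≤ max R0 0 := le_max_left _ _
    rw [hR_def] at hu
    linarith
  have hIic_abs : ∀ t : ℝ, t ≤ 0 →
      |∫ u in Set.Iic t, f u| ≤ 2 * C * Real.exp (a * t) / a := by
    intro t ht
    have h1 : |∫ u in Set.Iic t, f u| ≤ ∫ u in Set.Iic t, |f u| := by
      simpa [Real.norm_eq_abs] using
        MeasureTheory.norm_integral_le_integral_norm (μ := volume.restrict (Set.Iic t)) f
    have h2 : ∫ u in Set.Iic t, |f u| ≤ ∫ u in Set.Iic t, 2 * C * Real.exp (a * u) := by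
      refine MeasureTheory.setIntegral_mono_on hfint.abs.integrableOn
        ((integrableOn_exp_mul_Iic' ha t).const_mul _) measurableSet_Iic ?_
      intro u hu
      have hu0 : u ≤ 0 := le_trans (Set.mem_Iic.1 hu) ht
      have h := hfb u
      rwa [abs_of_nonpos hu0, show -(a * -u) = a * u by ring] at h
    have h3 : ∫ u in Set.Iic t, 2 * C * Real.exp (a * u) = 2 * C * Real.exp (a * t) / a := by
      rw [MeasureTheory.integral_const_mul, integral_exp_mul_Iic' ha t]; ring
    linarith
  have hIoi_abs : ∀ t : ℝ, 0 ≤ t →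
      |∫ u in Set.Ioi t, f u| ≤ 2 * C * Real.exp (-(a * t)) / a := by
    intro t ht
    have h1 : |∫ u in Set.Ioi t, f u| ≤ ∫ u in Set.Ioi t, |f u| := by
      simpa [Real.norm_eq_abs] using
        MeasureTheory.norm_integral_le_integral_norm (μ := volume.restrict (Set.Ioi t)) f
    have h2 : ∫ u in Set.Ioi t, |f u| ≤ ∫ u in Set.Ioi t, 2 * C * Real.exp (-(a * u)) := by
      refine MeasureTheory.setIntegral_mono_on hfint.abs.integrableOn
        ((integrableOn_exp_neg_mul_Ioi' ha t).const_mul _) measurableSet_Ioi ?_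
      intro u hu
      have hu0 : 0 ≤ u := le_of_lt (lt_of_le_of_lt ht (Set.mem_Ioi.1 hu))
      have h := hfb u
      rwa [abs_of_nonneg hu0] at h
    have h3 : ∫ u in Set.Ioi t, 2 * C * Real.exp (-(a * u))
        = 2 * C * Real.exp (-(a * t)) / a := by
      rw [MeasureTheory.integral_const_mul, integral_exp_neg_mul_Ioi' ha t]; ring
    linarith
  have hleft : ∀ t : ℝ, t ≤ -R → Real.exp (-ν * |t|) * |Gt t| ≤ 2 * C / a := by
    intro t ht
    have ht0 : t ≤ 0 := le_trans ht (by linarith)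
    have hKt : (∫ u in Set.Iic t, κ u) = 0 := by
      rw [MeasureTheory.setIntegral_congr_fun measurableSet_Iic (g := fun _ => (0:ℝ)) ?_]
      · simp
      · intro u hu
        have hu1 : u ≤ t := Set.mem_Iic.1 hu
        exact hκzero u (by rw [abs_of_nonpos (le_trans hu1 ht0)]; linarith)
    have hcle : Real.cosh (p₀ * t) ≤ Real.exp (-(p₀ * t)) := by
      have h := cosh_le_exp_abs' (p₀ * t)
      rwa [abs_of_nonpos (by nlinarith : p₀ * t ≤ 0)] at h
    rw [hGt_eq, hKt, zero_mul, sub_zero, abs_mul, abs_of_pos (Real.cosh_pos _),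
      abs_of_nonpos ht0]
    calc Real.exp (-ν * -t) * (Real.cosh (p₀ * t) * |∫ u in Set.Iic t, f u|)
        ≤ Real.exp (-ν * -t) * (Real.exp (-(p₀ * t)) * (2 * C * Real.exp (a * t) / a)) := by
          refine mul_le_mul_of_nonneg_left ?_ (Real.exp_pos _).le
          exact mul_le_mul hcle (hIic_abs t ht0) (abs_nonneg _) (Real.exp_pos _).le
      _ = 2 * C / a * (Real.exp (-ν * -t) * Real.exp (-(p₀ * t)) * Real.exp (a * t)) := by
          ring
      _ = 2 * C / a := by
          rw [← Real.exp_add, ← Real.exp_add,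
            show -ν * -t + -(p₀ * t) + a * t = 0 by rw [ha_def]; ring,
            Real.exp_zero, mul_one]
  have hright : ∀ t : ℝ, R ≤ t → Real.exp (-ν * |t|) * |Gt t| ≤ 2 * C / a := by
    intro t ht
    have ht0 : (0:ℝ) ≤ t := le_trans (by linarith) ht
    have hKt : (∫ u in Set.Iic t, κ u) = 1 := by
      have h0 : (∫ u in Set.Ioi t, κ u) = 0 := by
        rw [MeasureTheory.setIntegral_congr_fun measurableSet_Ioi (g := fun _ => (0:ℝ)) ?_]
        · simp
        · intro u hu
          have hu1 : t < u := Set.mem_Ioi.1 hu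
          exact hκzero u (by rw [abs_of_nonneg (le_of_lt (lt_of_le_of_lt ht0 hu1))]; linarith)
      have h1 := intervalIntegral.integral_Iic_add_Ioi (b := t)
        hκint.integrableOn hκint.integrableOn
      rw [h0, add_zero, hκ1] at h1
      exact h1
    have hFI : (∫ u in Set.Iic t, f u) - I = -∫ u in Set.Ioi t, f u := by
      have h1 := intervalIntegral.integral_Iic_add_Ioi (b := t)
        hfint.integrableOn hfint.integrableOn
      rw [hI_def]
      linarith
    have hcle : Real.cosh (p₀ * t) ≤ Real.exp (p₀ * t) := by
      have h := cosh_le_exp_abs' (p₀ * t)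
      rwa [abs_of_nonneg (by positivity : (0:ℝ) ≤ p₀ * t)] at h
    rw [hGt_eq, hKt, one_mul, hFI, abs_mul, abs_neg, abs_of_pos (Real.cosh_pos _),
      abs_of_nonneg ht0]
    calc Real.exp (-ν * t) * (Real.cosh (p₀ * t) * |∫ u in Set.Ioi t, f u|)
        ≤ Real.exp (-ν * t) * (Real.exp (p₀ * t) * (2 * C * Real.exp (-(a * t)) / a)) := by
          refine mul_le_mul_of_nonneg_left ?_ (Real.exp_pos _).le
          exact mul_le_mul hcle (hIoi_abs t ht0) (abs_nonneg _) (Real.exp_pos _).le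
      _ = 2 * C / a * (Real.exp (-ν * t) * Real.exp (p₀ * t) * Real.exp (-(a * t))) := by
          ring
      _ = 2 * C / a := by
          rw [← Real.exp_add, ← Real.exp_add,
            show -ν * t + p₀ * t + -(a * t) = 0 by rw [ha_def]; ring,
            Real.exp_zero, mul_one]
  have hmidc : ContinuousOn (fun t : ℝ => Real.exp (-ν * |t|) * |Gt t|) (Set.Icc (-R) R) :=
    ((Real.continuous_exp.comp (continuous_const.mul continuous_abs)).mul
      hGtc.abs).continuousOn
  obtain ⟨M₀, hM₀⟩ := isCompact_Icc.exists_bound_of_continuousOn hmidc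
  set M₁ : ℝ := max (2 * C / a) M₀ with hM₁_def
  have hM₁ : ∀ t : ℝ, Real.exp (-ν * |t|) * |Gt t| ≤ M₁ := by
    intro t
    rcases le_total t (-R) with h | h
    · exact le_trans (hleft t h) (le_max_left _ _)
    rcases le_total R t with h' | h'
    · exact le_trans (hright t h') (le_max_left _ _)
    · refine le_trans ?_ (le_max_right _ _)
      have hb := hM₀ t ⟨h, h'⟩
      rw [Real.norm_eq_abs] at hb
      exact le_trans (le_abs_self _) hb
  have hφc : Continuous (fun t : ℝ => Real.exp (-ν * |t|) * Real.cosh (p₀ * t) * |I| * κ t) :=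
    (((Real.continuous_exp.comp (continuous_const.mul continuous_abs)).mul
      (Real.continuous_cosh.comp (continuous_const.mul continuous_id))).mul
      continuous_const).mul hκc
  have hφsupp : HasCompactSupport
      (fun t : ℝ => Real.exp (-ν * |t|) * Real.cosh (p₀ * t) * |I| * κ t) :=
    hκsupp.mul_left
  obtain ⟨C₂, hC₂⟩ := hφc.bounded_above_of_compact_support hφsupp
  refine ⟨M₁ + (C + C₂ + p₀ * M₁), fun t => ?_⟩
  have e1 : Real.exp (-ν * |t|) * |Gt t| ≤ M₁ := hM₁ t
  have e2 : Real.exp (-ν * |t|) * |G t| ≤ C := hC t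
  have e3 : Real.exp (-ν * |t|) * Real.cosh (p₀ * t) * |I| * κ t ≤ C₂ := by
    have hb := hC₂ t
    rw [Real.norm_eq_abs] at hb
    exact le_trans (le_abs_self _) hb
  have e4 : |deriv Gt t| ≤ |G t| + Real.cosh (p₀ * t) * |I| * κ t + p₀ * |Gt t| := by
    rw [hderiv t]
    have h1 := abs_add_le (G t - Real.cosh (p₀ * t) * κ t * I) (p₀ * Real.tanh (p₀ * t) * Gt t)
    have h2 := abs_sub (G t) (Real.cosh (p₀ * t) * κ t * I)
    have h3 : |Real.cosh (p₀ * t) * κ t * I| = Real.cosh (p₀ * t) * |I| * κ t := by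
      rw [abs_mul, abs_mul, abs_of_pos (Real.cosh_pos _), abs_of_nonneg (hκ0 t)]; ring
    have h4 : |p₀ * Real.tanh (p₀ * t) * Gt t| ≤ p₀ * |Gt t| := by
      rw [abs_mul, abs_mul, abs_of_pos hp₀]
      have h5 := abs_tanh_le_one (p₀ * t)
      have h6 := mul_le_mul_of_nonneg_right
        (mul_le_mul_of_nonneg_left h5 hp₀.le) (abs_nonneg (Gt t))
      simpa using h6
    rw [h3] at h2
    linarith
  have epos : (0:ℝ) < Real.exp (-ν * |t|) := Real.exp_pos _
  calc Real.exp (-ν * |t|) * (|Gt t| + |deriv Gt t|)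
      = Real.exp (-ν * |t|) * |Gt t| + Real.exp (-ν * |t|) * |deriv Gt t| := by ring
    _ ≤ M₁ + Real.exp (-ν * |t|) * (|G t| + Real.cosh (p₀ * t) * |I| * κ t + p₀ * |Gt t|) :=
        add_le_add e1 (mul_le_mul_of_nonneg_left e4 epos.le)
    _ = M₁ + (Real.exp (-ν * |t|) * |G t|
        + Real.exp (-ν * |t|) * Real.cosh (p₀ * t) * |I| * κ t
        + p₀ * (Real.exp (-ν * |t|) * |Gt t|)) := by ring
    _ ≤ M₁ + (C + C₂ + p₀ * M₁) := by
        have h6 := mul_le_mul_of_nonneg_left e1 hp₀.le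
        linarith
end
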